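/- arXiv:2512.15403 — 5 statements merged into one kernel-verified Lean document; each statement's English description precedes it below -/
import Mathlib

section
/- Let X be a connected, simply connected, locally path-connected metric space, and let Ω ⊂ X be an open connected subset. Then the boundary ∂Ω is connected if and only if the complement X \ Ω is connected. -/
/-!
Simply connected, locally path-connected normal spaces are unicoherent: if `X = S ∪ T` with `S`,
`T` closed and connected, then `S ∩ T` is connected. Otherwise Urysohn's lemma gives
`w : X → [0, 1]` equal to `0` and `1` on the two pieces of `S ∩ T`; gluing `exp (2πi w)` on `S`
with `1` on `T` gives a map to the circle, which lifts to `h : X → ℝ`. Then `h` is constant on `T`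
and `h - 2πw` is constant on `S`, so `w` is constant on `S ∩ T`, which is absurd.
Taking `S = closure Ω` and `T = Ωᶜ` shows that `∂Ω = S ∩ T` is connected when `Ωᶜ` is.
Conversely, if `∂Ω` is connected, a relatively clopen part of `Ωᶜ` missing `∂Ω` is clopen in `X`.
-/

open Set

section

variable {X : Type*} [TopologicalSpace X]

theorem isPreconnected_compl_of_isPreconnected_frontier [PreconnectedSpace X] {s : Set X}
    (hs : IsOpen s) (hne : s.Nonempty) (h : IsPreconnected (frontier s)) :
    IsPreconnected sᶜ := by
  have hfs : frontier s = closure s ∩ sᶜ := hs.frontier_eq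
  have subset_of_frontier_subset : ∀ u v : Set X, IsClosed u → IsClosed v → sᶜ ⊆ u ∪ v →
      Disjoint u v → frontier s ⊆ u → sᶜ ⊆ u := by
    intro u v hu hv hcov huv hfu
    have hrest : sᶜ ∩ v = (closure s ∪ u)ᶜ := by
      ext x
      constructor
      · rintro ⟨hxs, hxv⟩
        have hxu : x ∉ u := huv.notMem_of_mem_right hxv
        exact fun hx => hx.elim (fun hxc => hxu (hfu (hfs ▸ ⟨hxc, hxs⟩))) hxu
      · intro hx
        have hxs : x ∉ s := fun hxs => hx (.inl (subset_closure hxs))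
        exact ⟨hxs, (hcov hxs).resolve_left fun hxu => hx (.inr hxu)⟩
    have hclopen : IsClopen (sᶜ ∩ v) :=
      ⟨hs.isClosed_compl.inter hv, hrest ▸ (isClosed_closure.union hu).isOpen_compl⟩
    obtain ⟨x, hx⟩ := hne
    have hempty : sᶜ ∩ v = ∅ :=
      (isClopen_iff.mp hclopen).resolve_right fun huniv => (huniv ▸ mem_univ x).1 hx
    intro y hy
    exact (hcov hy).resolve_right fun hyv => (hempty ▸ ⟨hy, hyv⟩ : y ∈ (∅ : Set X))
  rw [isPreconnected_iff_subset_of_fully_disjoint_closed hs.isClosed_compl]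
  intro u v hu hv hcov huv
  rcases (isPreconnected_iff_subset_of_fully_disjoint_closed isClosed_frontier).mp h u v hu hv
    ((hfs ▸ inter_subset_right).trans hcov) huv with hfu | hfv
  · exact .inl (subset_of_frontier_subset u v hu hv hcov huv hfu)
  · exact .inr (subset_of_frontier_subset v u hv hu (union_comm u v ▸ hcov) huv.symm hfv)

theorem IsPreconnected.eq_of_circleExp_eq_one {S : Set X} (hS : IsPreconnected S) {f : X → ℝ}
    (hf : ContinuousOn f S) (h1 : ∀ x ∈ S, Circle.exp (f x) = 1) {x y : X} (hx : x ∈ S)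
    (hy : y ∈ S) : f x = f y :=
  Circle.isCoveringMap_exp.eqOn_of_comp_eqOn hS continuousOn_const hf
    (fun z hz => (h1 x hx).trans (h1 z hz).symm) hx rfl hy

theorem exists_lift_circleExp [SimplyConnectedSpace X] [LocallyPathConnectedSpace X]
    (g : C(X, Circle)) : ∃ h : C(X, ℝ), Circle.exp ∘ h = g := by
  obtain ⟨x₀⟩ := (inferInstance : Nonempty X)
  obtain ⟨h, -, hh⟩ := (Circle.isCoveringMap_exp.existsUnique_continuousMap_lifts g x₀
    (Complex.arg (g x₀)) (Circle.exp_arg _)).exists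
  exact ⟨h, hh⟩

theorem eq_of_circleExp_eq_one_on_inter [SimplyConnectedSpace X] [LocallyPathConnectedSpace X]
    {s t : Set X} (hs' : IsPreconnected s) (hs : IsClosed s) (ht' : IsPreconnected t)
    (ht : IsClosed t) (hst : s ∪ t = univ) {φ : X → ℝ} (hφ : Continuous φ)
    (h1 : ∀ x ∈ s ∩ t, Circle.exp (φ x) = 1) {x y : X} (hx : x ∈ s ∩ t) (hy : y ∈ s ∩ t) :
    φ x = φ y := by
  classical
  have hfrontier : frontier s ⊆ s ∩ t := fun z hz =>
    ⟨hs.frontier_subset hz, ht.closure_subset_iff.mpr (compl_subset_iff_union.mpr hst)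
      (frontier_subset_closure (frontier_compl s ▸ hz))⟩
  let g : C(X, Circle) := ⟨fun z => if z ∈ s then Circle.exp (φ z) else 1,
    Continuous.if (fun z hz => h1 z (hfrontier hz)) (Circle.exp.continuous.comp hφ)
      continuous_const⟩
  obtain ⟨h, hh⟩ := exists_lift_circleExp g
  have hexp : ∀ z, Circle.exp (h z) = g z := congrFun hh
  have hts : ∀ z ∈ t, Circle.exp (h z) = 1 := fun z hz => by
    rw [hexp]; by_cases hzs : z ∈ s
    · simp only [g, ContinuousMap.coe_mk, if_pos hzs]; exact h1 z ⟨hzs, hz⟩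
    · simp only [g, ContinuousMap.coe_mk, if_neg hzs]
  have hss : ∀ z ∈ s, Circle.exp (h z - φ z) = 1 := fun z hz => by
    rw [Circle.exp_sub, hexp]; simp only [g, ContinuousMap.coe_mk, if_pos hz, div_self']
  have hht := ht'.eq_of_circleExp_eq_one h.continuous.continuousOn hts hx.2 hy.2
  have hhs := hs'.eq_of_circleExp_eq_one (f := fun z => h z - φ z)
    (h.continuous.sub hφ).continuousOn hss hx.1 hy.1
  linarith

theorem IsPreconnected.inter_of_isClosed_of_union_eq_univ [NormalSpace X] [SimplyConnectedSpace X]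
    [LocallyPathConnectedSpace X] {s t : Set X} (hs' : IsPreconnected s) (hs : IsClosed s)
    (ht' : IsPreconnected t) (ht : IsClosed t) (hst : s ∪ t = univ) : IsPreconnected (s ∩ t) := by
  rw [isPreconnected_iff_subset_of_fully_disjoint_closed (hs.inter ht)]
  intro u v hu hv hcov huv
  by_contra! hsep
  obtain ⟨a, ha, hau⟩ := not_subset.mp hsep.1
  obtain ⟨b, hb, hbv⟩ := not_subset.mp hsep.2
  obtain ⟨w, hwu, hwv, -⟩ := exists_continuous_zero_one_of_isClosed hu hv huv
  have hw : ∀ x ∈ s ∩ t, w x = 0 ∨ w x = 1 := fun x hx => (hcov hx).imp (hwu ·) (hwv ·)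
  have hwa : w a = 1 := hwv ((hcov ha).resolve_left hau)
  have hwb : w b = 0 := hwu ((hcov hb).resolve_right hbv)
  have := eq_of_circleExp_eq_one_on_inter hs' hs ht' ht hst (φ := fun x => 2 * Real.pi * w x)
    (by fun_prop) (fun x hx => by rcases hw x hx with h | h <;> simp [h]) ha hb
  simp only [hwa, hwb] at this
  linarith [Real.pi_pos]

end

theorem boundary_connected_iff_complement_connected_general
    {X : Type*} [MetricSpace X] [SimplyConnectedSpace X]
    [LocallyPathConnectedSpace X] {Ω : Set X} (hopen : IsOpen Ω) (hconn : IsConnected Ω) :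
    IsConnected (frontier Ω) ↔ IsConnected (Ωᶜ) := by
  have hfr : frontier Ω = closure Ω ∩ Ωᶜ := hopen.frontier_eq
  constructor
  · intro h
    exact ⟨h.nonempty.mono (hfr ▸ inter_subset_right),
      isPreconnected_compl_of_isPreconnected_frontier hopen hconn.nonempty h.isPreconnected⟩
  · intro h
    have hcover : closure Ω ∪ Ωᶜ = univ :=
      eq_univ_of_univ_subset (union_compl_self Ω ▸ union_subset_union_left _ subset_closure)
    refine ⟨nonempty_frontier_iff.mpr ⟨hconn.nonempty, nonempty_compl.mp h.nonempty⟩, ?_⟩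
    rw [hfr]
    exact hconn.isPreconnected.closure.inter_of_isClosed_of_union_eq_univ isClosed_closure
      h.isPreconnected hopen.isClosed_compl hcover

/-- Let `X` be a connected, simply connected, locally path-connected
metric space, and let `Ω ⊆ X` be an open connected subset. Then the boundary `∂Ω`
is connected if and only if the complement `X \ Ω` is connected. -/
theorem boundary_connected_iff_complement_connected
    {X : Type*} [MetricSpace X] [ConnectedSpace X] [SimplyConnectedSpace X]
    [LocallyPathConnectedSpace X] {Ω : Set X} (hopen : IsOpen Ω) (hconn : IsConnected Ω) :
    IsConnected (frontier Ω) ↔ IsConnected (Ωᶜ) :=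
  boundary_connected_iff_complement_connected_general hopen hconn
end

section
/- Let X be a simply connected, locally path-connected metric space, and let Ω₁,…,Ω_q be pairwise disjoint, non-empty, open, connected subsets with Ω_i = interior(closure(Ω_i)) for each i and with the union of the closures of all Ω_i equal to X. If the set Σ = ∪_i ∂Ω_i is disconnected, then there exist a partition of {1,…,q} into three non-empty sets I, {ℓ}, J such that X is the disjoint union of ∪_{i∈I} closure(Ω_i), Ω_ℓ, and ∪_{j∈J} closure(Ω_j), and ∂Ω_ℓ is the disjoint union of the two non-empty sets ∂(∪_{i∈I} closure(Ω_i)) and ∂(∪_{j∈J} closure(Ω_j)). -/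
/-!
Write `Σ = A ∪ B` with `A`, `B` disjoint, closed and non-empty. Some cell `Ω_ℓ` has a frontier
meeting both `A` and `B`: otherwise the closures of the cells whose frontier lies in `A`, and
those of the other cells, would split `X` into two disjoint closed non-empty sets.

By regularity, `X \ Ω_ℓ = K := ⋃_{i ≠ ℓ} Ω̄_i`, so `∂Ω_ℓ = Ω̄_ℓ ∩ K`. A simply connected,
locally path-connected normal space is unicoherent: if `X = H ∪ K` with `H`, `K` closed and
connected and `H ∩ K = P ⊔ Q` with `P`, `Q` closed and non-empty, take an Urysohn function `u`
(`0` on `P`, `1` on `Q`) and the map to `ℝ / 2ℤ` equal to `u` on `H` and to `-u` on `K`; a real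
lift `F` makes `F - u` constant on `H` and `F + u` constant on `K`, which is absurd at a point of
`P` and a point of `Q`. Hence `K` is disconnected, and `I` collects the cells in the component of
`K` through a point of `∂Ω_ℓ`, while `J` collects the remaining cells `≠ ℓ`.
-/

open Set Function

section Frontier

variable {X : Type*} [TopologicalSpace X] {A B U : Set X}

theorem closure_inter_closure_subset_frontier (hU : IsOpen U) (hUA : Disjoint U A) :
    closure U ∩ closure A ⊆ frontier U := fun _ ⟨hxU, hxA⟩ =>
  hU.frontier_eq ▸ ⟨hxU, fun hx => disjoint_left.mp (hUA.symm.closure_left hU) hxA hx⟩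

theorem frontier_eq_inter_frontier_of_compl_eq_union (hA : IsClosed A) (hB : IsClosed B)
    (hAB : Disjoint A B) (hUc : Uᶜ = A ∪ B) : frontier A = A ∩ frontier U := by
  have hAc : Aᶜ = U ∪ B := by
    ext x
    have : x ∈ A → x ∉ B := fun h => disjoint_left.mp hAB h
    rw [mem_union, ← notMem_compl_iff (s := U), hUc, mem_union, mem_compl_iff]
    tauto
  have hAU : Disjoint A U := disjoint_compl_right.mono_right (hAc ▸ subset_union_left)
  rw [frontier_eq_closure_inter_closure, hA.closure_eq, hAc, closure_union, hB.closure_eq,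
    inter_union_distrib_left, hAB.inter_eq, union_empty, frontier, inter_sdiff_distrib_left,
    (hAU.mono_right interior_subset).inter_eq, sdiff_empty]

theorem frontier_eq_union_frontier_of_compl_eq_union (hU : IsOpen U) (hA : IsClosed A)
    (hB : IsClosed B) (hAB : Disjoint A B) (hUc : Uᶜ = A ∪ B) :
    frontier U = frontier A ∪ frontier B := by
  rw [frontier_eq_inter_frontier_of_compl_eq_union hA hB hAB hUc,
    frontier_eq_inter_frontier_of_compl_eq_union hB hA hAB.symm (union_comm A B ▸ hUc),
    ← union_inter_distrib_right, ← hUc,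
    inter_eq_right.mpr (hU.frontier_eq ▸ sdiff_subset_compl _ _)]

end Frontier

section Unicoherence

variable {X : Type*} [TopologicalSpace X]

theorem exists_lift_addCircle [SimplyConnectedSpace X] [LocallyPathConnectedSpace X] {p : ℝ}
    (f : C(X, AddCircle p)) : ∃ F : C(X, ℝ), ∀ x, (F x : AddCircle p) = f x := by
  obtain ⟨x₀⟩ := (inferInstance : Nonempty X)
  obtain ⟨e₀, he₀⟩ := QuotientAddGroup.mk_surjective (f x₀)
  obtain ⟨F, ⟨-, hF⟩, -⟩ :=
    (AddCircle.isCoveringMap_coe p).existsUnique_continuousMap_lifts f x₀ e₀ he₀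
  exact ⟨F, congrFun hF⟩

theorem IsPreconnected.eq_of_coe_addCircle_eq_zero {s : Set X} (hs : IsPreconnected s) {p : ℝ}
    {g : X → ℝ} (hg : ContinuousOn g s) (hg0 : ∀ x ∈ s, (g x : AddCircle p) = 0) {x y : X}
    (hx : x ∈ s) (hy : y ∈ s) : g x = g y :=
  hs.constant_of_mapsTo (T := (AddSubgroup.zmultiples p : Set ℝ))
    (SetLike.isDiscrete_iff_discreteTopology.mpr inferInstance) hg
    (fun x hx => (QuotientAddGroup.eq_zero_iff _).mp (hg0 x hx)) hx hy

theorem IsPreconnected.inter_of_union_eq_univ [NormalSpace X] [SimplyConnectedSpace X]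
    [LocallyPathConnectedSpace X] {H K : Set X} (hHc : IsPreconnected H) (hKc : IsPreconnected K)
    (hH : IsClosed H) (hK : IsClosed K) (hHK : H ∪ K = univ) :
    IsPreconnected (H ∩ K) := by
  classical
  rw [isPreconnected_closed_iff]
  rintro t t' ht ht' hsub ⟨x, hxHK, hxt⟩ ⟨y, hyHK, hyt'⟩
  by_contra hempty
  have hPQ : Disjoint (H ∩ K ∩ t) (H ∩ K ∩ t') := by
    rw [disjoint_iff_inter_eq_empty, ← not_nonempty_iff_eq_empty]
    exact fun ⟨z, ⟨hzHK, hzt⟩, _, hzt'⟩ => hempty ⟨z, hzHK, hzt, hzt'⟩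
  obtain ⟨u, hu0, hu1, -⟩ := exists_continuous_zero_one_of_isClosed
    ((hH.inter hK).inter ht) ((hH.inter hK).inter ht') hPQ
  have hagree :
      ∀ z ∈ H ∩ K, ((u z : ℝ) : AddCircle (2 : ℝ)) = ((-u z : ℝ) : AddCircle (2 : ℝ)) := by
    intro z hz
    rcases hsub hz with hzt | hzt'
    · simp [hu0 ⟨hz, hzt⟩]
    · rw [hu1 ⟨hz, hzt'⟩, Pi.one_apply, ← AddCircle.coe_add_period (2 : ℝ) (-1)]
      norm_num
  have hfront : frontier H ⊆ H ∩ K := fun z hz =>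
    ⟨hH.frontier_subset hz, closure_minimal (fun w hw => (hHK ▸ mem_univ w).resolve_left hw) hK
      (frontier_eq_closure_inter_closure.subset hz).2⟩
  let f : C(X, AddCircle (2 : ℝ)) :=
    ⟨fun z => if z ∈ H then ((u z : ℝ) : AddCircle (2 : ℝ)) else ((-u z : ℝ) : AddCircle (2 : ℝ)),
      Continuous.if (fun z hz => hagree z (hfront hz)) (by fun_prop) (by fun_prop)⟩
  obtain ⟨F, hF⟩ := exists_lift_addCircle f
  have hfK : ∀ z ∈ K, f z = ((-u z : ℝ) : AddCircle (2 : ℝ)) := fun z hz => by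
    by_cases hzH : z ∈ H
    · exact (if_pos hzH).trans (hagree z ⟨hzH, hz⟩)
    · exact if_neg hzH
  have hFH : ∀ z ∈ H, ((F z - u z : ℝ) : AddCircle (2 : ℝ)) = 0 := fun z hz => by
    rw [AddCircle.coe_sub, hF]
    exact sub_eq_zero.mpr (if_pos hz)
  have hFK : ∀ z ∈ K, ((F z + u z : ℝ) : AddCircle (2 : ℝ)) = 0 := fun z hz => by
    rw [AddCircle.coe_add, hF, hfK z hz, AddCircle.coe_neg, neg_add_cancel]
  have eH := hHc.eq_of_coe_addCircle_eq_zero (by fun_prop) hFH hxHK.1 hyHK.1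
  have eK := hKc.eq_of_coe_addCircle_eq_zero (by fun_prop) hFK hxHK.2 hyHK.2
  rw [hu0 ⟨hxHK, hxt⟩, hu1 ⟨hyHK, hyt'⟩] at eH eK
  simp only [Pi.zero_apply, Pi.one_apply] at eH eK
  linarith

end Unicoherence

section Cells

variable {X : Type*} [TopologicalSpace X] {ι : Type*} {Ω : ι → Set X}

theorem isClosed_biUnion_closure [Finite ι] (S : Set ι) : IsClosed (⋃ i ∈ S, closure (Ω i)) :=
  (toFinite S).isClosed_biUnion fun _ _ => isClosed_closure

theorem mem_frontier_of_mem_iUnion_frontier (hdisj : Pairwise (Disjoint on Ω))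
    (hopen : ∀ i, IsOpen (Ω i)) {x : X} (hx : x ∈ ⋃ j, frontier (Ω j)) {i : ι}
    (hxi : x ∈ closure (Ω i)) : x ∈ frontier (Ω i) := by
  obtain ⟨j, hxj⟩ := mem_iUnion.mp hx
  obtain rfl | hij := eq_or_ne i j
  · exact hxj
  · exact closure_inter_closure_subset_frontier (hopen i) (hdisj hij)
      ⟨hxi, frontier_subset_closure hxj⟩

theorem exists_not_isPreconnected_frontier [PreconnectedSpace X] [Finite ι]
    (hdisj : Pairwise (Disjoint on Ω)) (hopen : ∀ i, IsOpen (Ω i))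
    (hcover : ⋃ i, closure (Ω i) = univ) (hbdry : ¬IsPreconnected (⋃ i, frontier (Ω i))) :
    ∃ ℓ, ¬IsPreconnected (frontier (Ω ℓ)) := by
  by_contra! hpre
  refine hbdry (isPreconnected_iff_subset_of_disjoint_closed.mpr fun t t' ht ht' hsub hempty => ?_)
  have hfr : ∀ i, frontier (Ω i) ⊆ ⋃ j, frontier (Ω j) := subset_iUnion _
  let T : Set ι := {i | frontier (Ω i) ⊆ t}
  have hT : ∀ i ∉ T, frontier (Ω i) ⊆ t' := fun i hi =>
    ((isPreconnected_iff_subset_of_disjoint_closed.mp (hpre i) t t' ht ht' ((hfr i).trans hsub)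
      (subset_empty_iff.mp (hempty ▸ inter_subset_inter_left _ (hfr i)))).resolve_left hi)
  have hcover' : univ ⊆ (⋃ i ∈ T, closure (Ω i)) ∪ ⋃ i ∈ Tᶜ, closure (Ω i) := by
    rw [← biUnion_union, union_compl_self, biUnion_univ, hcover]
  have hdisj' : univ ∩ ((⋃ i ∈ T, closure (Ω i)) ∩ ⋃ i ∈ Tᶜ, closure (Ω i)) = ∅ := by
    refine subset_empty_iff.mp fun x ⟨_, hxT, hxTc⟩ => ?_
    obtain ⟨i, hi, hxi⟩ := mem_iUnion₂.mp hxT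
    obtain ⟨j, hj, hxj⟩ := mem_iUnion₂.mp hxTc
    have hxfr : x ∈ frontier (Ω i) := closure_inter_closure_subset_frontier (hopen i)
      (hdisj (ne_of_mem_of_not_mem hi hj)) ⟨hxi, hxj⟩
    have hx := hfr i hxfr
    exact hempty.subset ⟨hx, hi hxfr,
      hT j hj (mem_frontier_of_mem_iUnion_frontier hdisj hopen hx hxj)⟩
  refine (isPreconnected_iff_subset_of_disjoint_closed.mp isPreconnected_univ _ _ (isClosed_biUnion_closure T)
    (isClosed_biUnion_closure Tᶜ) hcover' hdisj').imp (fun h x hx => ?_) (fun h x hx => ?_)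
  · obtain ⟨i, hi, hxi⟩ := mem_iUnion₂.mp (h (mem_univ x))
    exact hi (mem_frontier_of_mem_iUnion_frontier hdisj hopen hx hxi)
  · obtain ⟨i, hi, hxi⟩ := mem_iUnion₂.mp (h (mem_univ x))
    exact hT i hi (mem_frontier_of_mem_iUnion_frontier hdisj hopen hx hxi)

theorem compl_eq_biUnion_closure [Finite ι] (hdisj : Pairwise (Disjoint on Ω))
    (hopen : ∀ i, IsOpen (Ω i)) (hcover : ⋃ i, closure (Ω i) = univ) {ℓ : ι}
    (hreg : Ω ℓ = interior (closure (Ω ℓ))) :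
    (Ω ℓ)ᶜ = ⋃ i ∈ ({ℓ}ᶜ : Set ι), closure (Ω i) := by
  refine Subset.antisymm (compl_subset_comm.mp ?_) ?_
  · rw [hreg]
    refine interior_maximal (fun x hx => ?_) ?_
    · obtain ⟨i, hi⟩ := mem_iUnion.mp (hcover ▸ mem_univ x)
      obtain rfl : i = ℓ := by_contra fun hiℓ => hx (mem_biUnion hiℓ hi)
      exact hi
    · exact (isClosed_biUnion_closure _).isOpen_compl
  · exact iUnion₂_subset fun i hi =>
      subset_compl_iff_disjoint_right.mpr ((hdisj hi).closure_left (hopen ℓ))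

theorem nonempty_frontier_biUnion_closure [PreconnectedSpace X] (hdisj : Pairwise (Disjoint on Ω))
    (hopen : ∀ i, IsOpen (Ω i)) (hne : ∀ i, (Ω i).Nonempty) {S : Set ι} (hS : S.Nonempty) {ℓ : ι}
    (hℓ : ℓ ∉ S) : (frontier (⋃ i ∈ S, closure (Ω i))).Nonempty := by
  obtain ⟨i, hi⟩ := hS
  obtain ⟨x, hx⟩ := hne i
  obtain ⟨y, hy⟩ := hne ℓ
  refine nonempty_frontier_iff.mpr ⟨⟨x, mem_biUnion hi (subset_closure hx)⟩,
    ne_univ_iff_exists_notMem _ |>.mpr ⟨y, fun hyS => ?_⟩⟩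
  obtain ⟨j, hj, hyj⟩ := mem_iUnion₂.mp hyS
  exact disjoint_left.mp ((hdisj (ne_of_mem_of_not_mem hj hℓ)).closure_left (hopen ℓ)) hyj hy

theorem exists_split_of_not_isPreconnected_frontier [Finite ι] [NormalSpace X]
    [SimplyConnectedSpace X] [LocallyPathConnectedSpace X] (hdisj : Pairwise (Disjoint on Ω)) (hopen : ∀ i, IsOpen (Ω i))
    (hconn : ∀ i, IsPreconnected (Ω i)) (hcover : ⋃ i, closure (Ω i) = univ) {ℓ : ι}
    (hreg : Ω ℓ = interior (closure (Ω ℓ))) (hℓ : ¬IsPreconnected (frontier (Ω ℓ))) :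
    ∃ I J : Set ι, I.Nonempty ∧ J.Nonempty ∧ I ∪ J = {ℓ}ᶜ ∧ Disjoint I J ∧
      Disjoint (⋃ i ∈ I, closure (Ω i)) (⋃ j ∈ J, closure (Ω j)) := by
  set K := ⋃ i ∈ ({ℓ}ᶜ : Set ι), closure (Ω i)
  have hK : (Ω ℓ)ᶜ = K := compl_eq_biUnion_closure hdisj hopen hcover hreg
  have hKc : IsClosed K := isClosed_biUnion_closure _
  have hfr : frontier (Ω ℓ) = closure (Ω ℓ) ∩ K := by
    rw [frontier_eq_closure_inter_closure, hK, hKc.closure_eq]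
  obtain ⟨p, hp⟩ : (frontier (Ω ℓ)).Nonempty :=
    nonempty_iff_ne_empty.mpr fun h => hℓ (h ▸ isPreconnected_empty)
  set C := connectedComponentIn K p
  have hcell : ∀ i ∈ ({ℓ}ᶜ : Set ι), (closure (Ω i) ∩ C).Nonempty → closure (Ω i) ⊆ C :=
    fun i hi ⟨x, hxi, hxC⟩ => ((hconn i).closure.subset_connectedComponentIn hxi
      (subset_biUnion_of_mem (u := fun i => closure (Ω i)) hi)).trans
      (connectedComponentIn_eq hxC).ge
  refine ⟨{ℓ}ᶜ ∩ {i | closure (Ω i) ⊆ C}, {ℓ}ᶜ \ {i | closure (Ω i) ⊆ C}, ?_, ?_,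
    inter_union_sdiff _ _, disjoint_sdiff_inter.symm, ?_⟩
  · obtain ⟨i, hi, hpi⟩ := mem_iUnion₂.mp ((hfr ▸ hp).2)
    exact ⟨i, hi, hcell i hi ⟨p, hpi, mem_connectedComponentIn (hfr ▸ hp).2⟩⟩
  · by_contra! hJ
    have hKC : K = C := (connectedComponentIn_subset K p).antisymm' <| iUnion₂_subset fun i hi =>
      by_contra fun hiC => hJ.subset ⟨hi, hiC⟩
    have hunion : closure (Ω ℓ) ∪ K = univ := by
      rw [← hK]
      exact eq_univ_of_subset (union_subset_union_left _ subset_closure) (union_compl_self _)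
    exact hℓ (hfr ▸ (hconn ℓ).closure.inter_of_union_eq_univ
      (hKC ▸ isPreconnected_connectedComponentIn) isClosed_closure hKc hunion)
  · refine disjoint_left.mpr fun x hxI hxJ => ?_
    obtain ⟨i, ⟨-, hiC⟩, hxi⟩ := mem_iUnion₂.mp hxI
    obtain ⟨j, ⟨hj, hjC⟩, hxj⟩ := mem_iUnion₂.mp hxJ
    exact hjC (hcell j hj ⟨x, hxj, hiC hxi⟩)

end Cells

/-- A `2`-connected partition of a simply connected space has connected
boundary: let `X` be a simply connected, locally path-connected metric space and let
`Ω₁, …, Ω_q` be pairwise disjoint, non-empty, open, connected subsets with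
`Ω_i = interior (closure Ω_i)` and `⋃ᵢ closure Ω_i = X`. If `Σ = ⋃ᵢ ∂Ω_i` is
disconnected, then there is a partition of the index set into non-empty sets `I`, `{ℓ}`,
`J` such that `X` is the disjoint union of `Ω̄_I`, `Ω_ℓ` and `Ω̄_J`, and `∂Ω_ℓ` is the
disjoint union of the two non-empty sets `∂Ω̄_I` and `∂Ω̄_J`. -/
theorem partition_of_simply_connected_disconnected_boundary
    {X : Type*} [MetricSpace X] [SimplyConnectedSpace X] [LocallyPathConnectedSpace X]
    {q : ℕ} (Ω : Fin q → Set X)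
    (hdisj : Pairwise (Function.onFun Disjoint Ω))
    (hne : ∀ i, (Ω i).Nonempty)
    (hopen : ∀ i, IsOpen (Ω i))
    (hconn : ∀ i, IsConnected (Ω i))
    (hreg : ∀ i, Ω i = interior (closure (Ω i)))
    (hcover : ⋃ i, closure (Ω i) = univ)
    (hSigma : ¬ IsPreconnected (⋃ i, frontier (Ω i))) :
    ∃ (I J : Set (Fin q)) (ℓ : Fin q),
      I.Nonempty ∧ J.Nonempty ∧ ℓ ∉ I ∧ ℓ ∉ J ∧ Disjoint I J ∧ I ∪ J ∪ {ℓ} = univ ∧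
      (univ : Set X) = (⋃ i ∈ I, closure (Ω i)) ∪ Ω ℓ ∪ (⋃ j ∈ J, closure (Ω j)) ∧
      Disjoint (⋃ i ∈ I, closure (Ω i)) (Ω ℓ) ∧
      Disjoint (⋃ j ∈ J, closure (Ω j)) (Ω ℓ) ∧
      Disjoint (⋃ i ∈ I, closure (Ω i)) (⋃ j ∈ J, closure (Ω j)) ∧
      frontier (Ω ℓ)
        = frontier (⋃ i ∈ I, closure (Ω i)) ∪ frontier (⋃ j ∈ J, closure (Ω j)) ∧
      Disjoint (frontier (⋃ i ∈ I, closure (Ω i))) (frontier (⋃ j ∈ J, closure (Ω j))) ∧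
      (frontier (⋃ i ∈ I, closure (Ω i))).Nonempty ∧
      (frontier (⋃ j ∈ J, closure (Ω j))).Nonempty := by
  obtain ⟨ℓ, hℓ⟩ := exists_not_isPreconnected_frontier hdisj hopen hcover hSigma
  obtain ⟨I, J, hI, hJ, hIJ, hdisjIJ, hCIJ⟩ := exists_split_of_not_isPreconnected_frontier hdisj
    hopen (fun i => (hconn i).isPreconnected) hcover (hreg ℓ) hℓ
  have hcompl : (Ω ℓ)ᶜ = (⋃ i ∈ I, closure (Ω i)) ∪ ⋃ j ∈ J, closure (Ω j) := by
    rw [compl_eq_biUnion_closure hdisj hopen hcover (hreg ℓ), ← hIJ, biUnion_union]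
  have hℓI : ℓ ∉ I := fun h => (hIJ ▸ subset_union_left h : ℓ ∈ ({ℓ}ᶜ : Set (Fin q))) rfl
  have hℓJ : ℓ ∉ J := fun h => (hIJ ▸ subset_union_right h : ℓ ∈ ({ℓ}ᶜ : Set (Fin q))) rfl
  refine ⟨I, J, ℓ, hI, hJ, hℓI, hℓJ, hdisjIJ, by rw [hIJ, compl_union_self], ?_,
    subset_compl_iff_disjoint_right.mp (hcompl ▸ subset_union_left),
    subset_compl_iff_disjoint_right.mp (hcompl ▸ subset_union_right), hCIJ,
    frontier_eq_union_frontier_of_compl_eq_union (hopen ℓ) (isClosed_biUnion_closure I)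
      (isClosed_biUnion_closure J) hCIJ hcompl,
    hCIJ.mono (isClosed_biUnion_closure I).frontier_subset
      (isClosed_biUnion_closure J).frontier_subset,
    nonempty_frontier_biUnion_closure hdisj hopen hne hI hℓI,
    nonempty_frontier_biUnion_closure hdisj hopen hne hJ hℓJ⟩
  rw [union_right_comm, ← hcompl, compl_union_self]
end

section
/- Let X be a connected topological space, and let Ω₁,…,Ω_q be pairwise disjoint non-empty open subsets whose closures cover X. If each topological boundary ∂Ω_i is connected and Σ = ∪_{i=1}^q ∂Ω_i is disconnected, then there is a non-empty proper subset I ⊂ {1,…,q} such that ∪_{i∈I} closure(Ω_i) and ∪_{i∉I} closure(Ω_i) are disjoint; since both are non-empty and closed with union X, this contradicts connectedness of X. Hence if Σ is disconnected, at least one cell Ω_ℓ has disconnected boundary. -/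
open Set

/-- Let `X` be a connected topological space and `Ω₁, …, Ω_q` pairwise
disjoint non-empty open subsets whose closures cover `X`. If the union of the boundaries
`Σ = ⋃ᵢ ∂Ω_i` is disconnected, then at least one cell `Ω_ℓ` has disconnected boundary.
(Indeed, were all boundaries connected, one could split the index set into a non-empty
proper subset `I` with `Ω̄_I` and `Ω̄_{Iᶜ}` disjoint, contradicting connectedness of `X`.) -/
theorem exists_cell_with_disconnected_boundary
    {X : Type*} [TopologicalSpace X] [ConnectedSpace X]
    {q : ℕ} (Ω : Fin q → Set X)
    (hdisj : Pairwise (Function.onFun Disjoint Ω))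
    (hne : ∀ i, (Ω i).Nonempty)
    (hopen : ∀ i, IsOpen (Ω i))
    (hcover : ⋃ i, closure (Ω i) = univ)
    (hSigma : ¬ IsPreconnected (⋃ i, frontier (Ω i))) :
    ∃ ℓ : Fin q, ¬ IsPreconnected (frontier (Ω ℓ)) := by
  by_contra hcon
  push_neg at hcon
  -- Key: closures of distinct cells can only meet along both frontiers.
  have key1 : ∀ i j : Fin q, i ≠ j →
      closure (Ω i) ∩ closure (Ω j) ⊆ frontier (Ω i) := by
    intro i j hij x hx
    rw [frontier, (hopen i).interior_eq]
    refine ⟨hx.1, fun hxi => ?_⟩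
    obtain ⟨y, hy⟩ := mem_closure_iff.mp hx.2 (Ω i) (hopen i) hxi
    exact Set.disjoint_left.mp (hdisj hij) hy.1 hy.2
  have key : ∀ i j : Fin q, i ≠ j →
      closure (Ω i) ∩ closure (Ω j) ⊆ frontier (Ω i) ∩ frontier (Ω j) := by
    intro i j hij x hx
    exact ⟨key1 i j hij hx, key1 j i hij.symm ⟨hx.2, hx.1⟩⟩
  by_cases hfr : ∀ i, (frontier (Ω i)).Nonempty
  · -- all frontiers are nonempty
    rw [IsPreconnected] at hSigma
    push_neg at hSigma
    obtain ⟨u, v, hu, hv, hcov, ha, hb, hempty⟩ := hSigma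
    have hsubS : ∀ i, frontier (Ω i) ⊆ ⋃ i, frontier (Ω i) :=
      fun i => subset_iUnion (fun j => frontier (Ω j)) i
    have dich : ∀ i, frontier (Ω i) ⊆ u ∨ frontier (Ω i) ⊆ v := by
      intro i
      rcases (frontier (Ω i) ∩ u).eq_empty_or_nonempty with h | h
      · right; intro x hx
        rcases hcov (hsubS i hx) with h' | h'
        · exact (Set.eq_empty_iff_forall_notMem.mp h x ⟨hx, h'⟩).elim
        · exact h'
      rcases (frontier (Ω i) ∩ v).eq_empty_or_nonempty with h2 | h2
      · left; intro x hx
        rcases hcov (hsubS i hx) with h' | h'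
        · exact h'
        · exact (Set.eq_empty_iff_forall_notMem.mp h2 x ⟨hx, h'⟩).elim
      exfalso
      obtain ⟨x, hx⟩ := hcon i u v hu hv ((hsubS i).trans hcov) h h2
      have : x ∈ (⋃ i, frontier (Ω i)) ∩ (u ∩ v) := ⟨hsubS i hx.1, hx.2⟩
      rw [hempty] at this
      exact this
    set I : Set (Fin q) := {i | frontier (Ω i) ⊆ u} with hI
    set A : Set X := ⋃ i ∈ I, closure (Ω i) with hA
    set B : Set X := ⋃ i ∈ Iᶜ, closure (Ω i) with hB
    have hAclosed : IsClosed A :=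
      Set.Finite.isClosed_biUnion (Set.toFinite I) (fun i _ => isClosed_closure)
    have hBclosed : IsClosed B :=
      Set.Finite.isClosed_biUnion (Set.toFinite Iᶜ) (fun i _ => isClosed_closure)
    have hunion : A ∪ B = univ := by
      rw [hA, hB, ← Set.biUnion_union, Set.union_compl_self, Set.biUnion_univ, hcover]
    have hABdisj : A ∩ B = ∅ := by
      rw [Set.eq_empty_iff_forall_notMem]
      rintro x ⟨hxA, hxB⟩
      obtain ⟨i, hiI, hxi⟩ := Set.mem_iUnion₂.mp hxA
      obtain ⟨j, hjI, hxj⟩ := Set.mem_iUnion₂.mp hxB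
      have hij : i ≠ j := fun h => hjI (h ▸ hiI)
      have hxf := key i j hij ⟨hxi, hxj⟩
      have hxu : x ∈ u := hiI hxf.1
      have hxv : x ∈ v := ((dich j).resolve_left hjI) hxf.2
      have : x ∈ (⋃ i, frontier (Ω i)) ∩ (u ∩ v) := ⟨hsubS j hxf.2, hxu, hxv⟩
      rw [hempty] at this
      exact this
    have hAne : A.Nonempty := by
      obtain ⟨a, haS, hau⟩ := ha
      obtain ⟨i, hai⟩ := Set.mem_iUnion.mp haS
      have hiI : i ∈ I := by
        rcases dich i with h | h
        · exact h
        · exfalso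
          have : a ∈ (⋃ i, frontier (Ω i)) ∩ (u ∩ v) := ⟨haS, hau, h hai⟩
          rw [hempty] at this
          exact this
      exact ⟨a, Set.mem_biUnion hiI (frontier_subset_closure hai)⟩
    have hBne : B.Nonempty := by
      obtain ⟨b, hbS, hbv⟩ := hb
      obtain ⟨i, hbi⟩ := Set.mem_iUnion.mp hbS
      have hiI : i ∈ Iᶜ := by
        intro h
        have : b ∈ (⋃ i, frontier (Ω i)) ∩ (u ∩ v) := ⟨hbS, h hbi, hbv⟩
        rw [hempty] at this
        exact this
      exact ⟨b, Set.mem_biUnion hiI (frontier_subset_closure hbi)⟩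
    have hAcomp : A = Bᶜ := by
      ext x
      constructor
      · exact fun hxA hxB => Set.eq_empty_iff_forall_notMem.mp hABdisj x ⟨hxA, hxB⟩
      · intro hxB
        have hx : x ∈ A ∪ B := by rw [hunion]; trivial
        exact hx.resolve_right hxB
    have hAopen : IsOpen A := by rw [hAcomp]; exact hBclosed.isOpen_compl
    rcases isClopen_iff.mp ⟨hAclosed, hAopen⟩ with h | h
    · exact absurd h (Set.nonempty_iff_ne_empty.mp hAne)
    · obtain ⟨b, hbB⟩ := hBne
      have : b ∈ A ∩ B := ⟨h ▸ Set.mem_univ b, hbB⟩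
      rw [hABdisj] at this
      exact this
  · -- some frontier is empty: then that cell is all of X and Σ = ∅
    push_neg at hfr
    obtain ⟨i, hi⟩ := hfr
    have hclopen : IsClopen (Ω i) := isClopen_iff_frontier_eq_empty.mpr hi
    have hΩi : Ω i = univ :=
      (isClopen_iff.mp hclopen).resolve_left (Set.nonempty_iff_ne_empty.mp (hne i))
    have hall : ∀ j : Fin q, j = i := by
      intro j
      by_contra h
      obtain ⟨y, hy⟩ := hne j
      exact Set.disjoint_left.mp (hdisj h) hy (hΩi ▸ Set.mem_univ y)
    apply hSigma
    have hSempty : (⋃ j, frontier (Ω j)) = ∅ := by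
      apply Set.eq_empty_iff_forall_notMem.mpr
      intro x hx
      obtain ⟨j, hj⟩ := Set.mem_iUnion.mp hx
      rw [hall j, hi] at hj
      exact hj
    rw [hSempty]
    exact isPreconnected_empty
end

section
/- The partition of the flat cylinder (ℝ/ℤ) × ℝ^{n-1} into q ≥ 3 vertical strips {(x,y) : θ_k < x < θ_{k+1}} (for 0 = θ₀ < θ₁ < … < θ_q = 1) has disconnected union of cell boundaries, each cell open connected with Ω_i = interior(closure(Ω_i)) and closures covering the space, yet there is no partition of {1,…,q} into non-empty I, {ℓ}, J with the space equal to the disjoint union of Ω̄_I, Ω_ℓ and Ω̄_J. Hence the conclusion of the '2-connected partition' theorem fails without simple connectedness. -/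
/-!
Projected to the circle, the union of the cell boundaries is the finite set of the `θ_k`, which
has at least two points, so it is not preconnected. Each cell is an open arc of length less than
the period times `ℝ^m`, hence regular open. Closures of cyclically consecutive cells meet (the last
one meets the first over `θ_q ≡ θ_0`), so in a splitting `I, {ℓ}, J` the walk `ℓ + 1, ℓ + 2, …`
around the cycle stays in `I ∪ J` until it returns to `ℓ` and can never pass from `I` to `J`.
-/

open Set

namespace AddCircle

variable {p : ℝ} {a b : ℝ}

theorem isOpen_coe_image_Ioo : IsOpen ((↑) '' Ioo a b : Set (AddCircle p)) :=
  QuotientAddGroup.isOpenMap_coe _ isOpen_Ioo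

theorem closure_coe_image_Ioo (hab : a < b) :
    closure ((↑) '' Ioo a b : Set (AddCircle p)) = (↑) '' Icc a b := by
  rw [← closure_Ioo hab.ne]
  exact (image_closure_of_isCompact (Metric.isBounded_Ioo a b).isCompact_closure
    (AddCircle.continuous_mk' p).continuousOn).symm

variable [Fact (0 < p)]

theorem coe_ne_coe_of_lt_of_lt_add (hab : a < b) (hb : b < a + p) : (a : AddCircle p) ≠ b :=
  fun h => hab.ne ((coe_eq_coe_iff_of_mem_Ico (left_mem_Ico.2 (lt_add_of_pos_right a Fact.out))
    ⟨hab.le, hb⟩).1 h)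

theorem compl_coe_image_Ioo (hab : a < b) (hb : b ≤ a + p) :
    ((↑) '' Ioo a b : Set (AddCircle p))ᶜ = (↑) '' Icc b (a + p) := by
  have hinj : InjOn ((↑) : ℝ → AddCircle p) (Ioc a (a + p)) :=
    fun x hx y hy => (coe_eq_coe_iff_of_mem_Ioc hx hy).1
  have hsplit : Ioc a (a + p) \ Ioo a b = Icc b (a + p) := by
    ext x; simp only [mem_sdiff, mem_Ioc, mem_Ioo, mem_Icc]; constructor
    · rintro ⟨⟨h1, h2⟩, h3⟩; exact ⟨not_lt.1 fun h => h3 ⟨h1, h⟩, h2⟩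
    · rintro ⟨h1, h2⟩; exact ⟨⟨hab.trans_le h1, h2⟩, fun h => h1.not_gt h.2⟩
  rw [← hsplit, hinj.image_sdiff_subset fun x hx => ⟨hx.1, hx.2.le.trans hb⟩,
    coe_image_Ioc_eq, compl_eq_univ_sdiff]

theorem compl_coe_image_Icc (hab : a ≤ b) (hb : b < a + p) :
    ((↑) '' Icc a b : Set (AddCircle p))ᶜ = (↑) '' Ioo b (a + p) := by
  have hinj : InjOn ((↑) : ℝ → AddCircle p) (Ico a (a + p)) :=
    fun x hx y hy => (coe_eq_coe_iff_of_mem_Ico hx hy).1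
  have hsplit : Ico a (a + p) \ Icc a b = Ioo b (a + p) := by
    ext x; simp only [mem_sdiff, mem_Ico, mem_Icc, mem_Ioo]; constructor
    · rintro ⟨⟨h1, h2⟩, h3⟩; exact ⟨not_le.1 fun h => h3 ⟨h1, h⟩, h2⟩
    · rintro ⟨h1, h2⟩; exact ⟨⟨hab.trans h1.le, h2⟩, fun h => h1.not_ge h.2⟩
  rw [← hsplit, hinj.image_sdiff_subset fun x hx => ⟨hx.1, hx.2.trans_lt hb⟩,
    coe_image_Ico_eq, compl_eq_univ_sdiff]

theorem interior_closure_coe_image_Ioo (hab : a < b) (hb : b < a + p) :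
    interior (closure ((↑) '' Ioo a b : Set (AddCircle p))) = (↑) '' Ioo a b := by
  -- `[a, b]` is the complement of the open arc `(b, a + p)`, whose closure is `[b, a + p]`.
  rw [closure_coe_image_Ioo hab, ← compl_eq_comm.1 (compl_coe_image_Icc hab.le hb),
    interior_compl, closure_coe_image_Ioo hb, ← compl_coe_image_Ioo hab hb.le, compl_compl]

theorem frontier_coe_image_Ioo (hab : a < b) (hb : b ≤ a + p) :
    frontier ((↑) '' Ioo a b : Set (AddCircle p)) = {(a : AddCircle p), (b : AddCircle p)} := by
  rw [frontier, closure_coe_image_Ioo hab, isOpen_coe_image_Ioo.interior_eq]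
  apply Subset.antisymm
  · rintro _ ⟨⟨x, hx, rfl⟩, hx'⟩
    rcases eq_endpoints_or_mem_Ioo_of_mem_Icc hx with rfl | rfl | hx
    exacts [.inl rfl, .inr rfl, (hx' ⟨x, hx, rfl⟩).elim]
  · have hcompl := compl_coe_image_Ioo hab hb
    rintro _ (rfl | rfl)
    · refine ⟨⟨a, ⟨le_rfl, hab.le⟩, rfl⟩, ?_⟩
      rw [← mem_compl_iff, hcompl]
      exact ⟨a + p, ⟨hb, le_rfl⟩, coe_add_period p a⟩
    · refine ⟨⟨b, ⟨hab.le, le_rfl⟩, rfl⟩, ?_⟩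
      rw [← mem_compl_iff, hcompl]
      exact ⟨b, ⟨le_rfl, hb⟩, rfl⟩

end AddCircle

namespace Fin

variable {n : ℕ}

theorem add_one_add_eq_self_iff {ℓ i : Fin (n + 1)} : ℓ + 1 + i = ℓ ↔ i = last n := by
  rw [add_assoc, add_eq_left]
  constructor
  · intro h
    exact add_right_cancel (b := 1) (by rw [last_add_one n, add_comm i 1, h])
  · rintro rfl
    exact (add_comm _ _).trans (last_add_one n)

theorem mem_of_ne_of_add_one_mem {S : Set (Fin (n + 1))} {ℓ : Fin (n + 1)} (hstart : ℓ + 1 ∈ S)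
    (hstep : ∀ k ∈ S, k + 1 ≠ ℓ → k + 1 ∈ S) {k : Fin (n + 1)} (hk : k ≠ ℓ) : k ∈ S := by
  suffices h : ∀ i : Fin (n + 1), i ≠ last n → ℓ + 1 + i ∈ S by
    have hk' : ℓ + 1 + (k - (ℓ + 1)) = k := add_sub_cancel _ _
    rw [← hk']
    exact h _ fun hi => hk (hk' ▸ add_one_add_eq_self_iff.2 hi)
  intro i
  induction i using Fin.induction with
  | zero => exact fun _ => by simpa using hstart
  | succ i ih =>
    intro hi
    have hsucc : ℓ + 1 + i.succ = ℓ + 1 + i.castSucc + 1 := by rw [← coeSucc_eq_succ]; abel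
    rw [hsucc]
    exact hstep _ (ih (castSucc_lt_last i).ne) fun h =>
      hi (add_one_add_eq_self_iff.1 (hsucc.trans h))

theorem exists_mem_Ico_castSucc_succ {α : Type*} [LinearOrder α] (f : Fin (n + 1) → α)
    {x : α} (hx : x ∈ Ico (f 0) (f (last n))) : ∃ k : Fin n, x ∈ Ico (f k.castSucc) (f k.succ) := by
  induction n with
  | zero => exact ((lt_irrefl _) (hx.1.trans_lt hx.2)).elim
  | succ n ih =>
    by_cases hlt : x < f (last n).castSucc
    · obtain ⟨k, hk⟩ := ih (f ∘ castSucc) ⟨hx.1, hlt⟩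
      exact ⟨k.castSucc, by rwa [succ_castSucc]⟩
    · exact ⟨last n, not_lt.1 hlt, by rw [succ_last]; exact hx.2⟩

end Fin

namespace StrictMono

variable {n : ℕ} {θ : Fin (n + 3) → ℝ}

theorem succ_sub_castSucc_lt (hθ : StrictMono θ) (k : Fin (n + 2)) :
    θ k.succ - θ k.castSucc < θ (Fin.last _) - θ 0 := by
  rcases eq_or_ne k 0 with rfl | hk
  · have : θ (Fin.succ 0) < θ (Fin.last _) := hθ (by simp [Fin.lt_def])
    simp only [Fin.castSucc_zero]
    linarith
  · have h0 : θ 0 < θ k.castSucc := hθ (Fin.castSucc_pos (Fin.pos_iff_ne_zero.2 hk))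
    have h1 : θ k.succ ≤ θ (Fin.last _) := hθ.monotone (Fin.le_last _)
    linarith

end StrictMono

theorem Monotone.succ_sub_castSucc_le {n : ℕ} {θ : Fin (n + 1) → ℝ} (hθ : Monotone θ) (k : Fin n) :
    θ k.succ - θ k.castSucc ≤ θ (Fin.last _) - θ 0 := by
  have h0 : θ 0 ≤ θ k.castSucc := hθ (Fin.zero_le _)
  have h1 : θ k.succ ≤ θ (Fin.last _) := hθ (Fin.le_last _)
  linarith

section CyclicChain

variable {X : Type*} {n : ℕ} {C : Fin (n + 1) → Set X} {I J : Set (Fin (n + 1))} {ℓ : Fin (n + 1)}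

theorem not_disjoint_biUnion_of_add_one_mem (hadj : ∀ k, (C k ∩ C (k + 1)).Nonempty)
    (hJ : J.Nonempty) (hℓJ : ℓ ∉ J) (hIJ : Disjoint I J) (hcover : I ∪ J ∪ {ℓ} = univ)
    (hℓ : ℓ + 1 ∈ I) : ¬ Disjoint (⋃ i ∈ I, C i) (⋃ j ∈ J, C j) := by
  intro hdisj
  have hstep : ∀ k ∈ I, k + 1 ≠ ℓ → k + 1 ∈ I := by
    intro k hk hkℓ
    obtain ⟨x, hxk, hxk'⟩ := hadj k
    have hmem : k + 1 ∈ I ∪ J ∪ {ℓ} := hcover ▸ mem_univ _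
    refine (hmem.resolve_right hkℓ).resolve_right fun hk' => ?_
    exact disjoint_left.1 hdisj (mem_biUnion hk hxk) (mem_biUnion hk' hxk')
  obtain ⟨j, hj⟩ := hJ
  exact disjoint_left.1 hIJ (Fin.mem_of_ne_of_add_one_mem hℓ hstep (ne_of_mem_of_not_mem hj hℓJ)) hj

theorem not_disjoint_biUnion_of_cyclic (hadj : ∀ k, (C k ∩ C (k + 1)).Nonempty)
    (hI : I.Nonempty) (hJ : J.Nonempty) (hℓI : ℓ ∉ I) (hℓJ : ℓ ∉ J) (hIJ : Disjoint I J)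
    (hcover : I ∪ J ∪ {ℓ} = univ) : ¬ Disjoint (⋃ i ∈ I, C i) (⋃ j ∈ J, C j) := by
  have hmem : ℓ + 1 ∈ I ∪ J ∪ {ℓ} := hcover ▸ mem_univ _
  rcases hmem with (hℓ | hℓ) | hℓ
  · exact not_disjoint_biUnion_of_add_one_mem hadj hJ hℓJ hIJ hcover hℓ
  · rw [union_comm I] at hcover
    exact fun h => not_disjoint_biUnion_of_add_one_mem hadj hI hℓI hIJ.symm hcover hℓ h.symm
  · obtain ⟨i, hi⟩ := hI
    have : n = 0 := by simpa using hℓ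
    subst this
    exact absurd (Subsingleton.elim (α := Fin 1) i ℓ ▸ hi) hℓI

end CyclicChain

section Strip

variable {n : ℕ}

def strip (p : ℝ) (Y : Type*) (θ : Fin (n + 1) → ℝ) (k : Fin n) : Set (AddCircle p × Y) :=
  ((↑) '' Ioo (θ k.castSucc) (θ k.succ)) ×ˢ univ

variable {p : ℝ} {Y : Type*} [TopologicalSpace Y]

theorem isOpen_strip (θ : Fin (n + 1) → ℝ) (k : Fin n) : IsOpen (strip p Y θ k) :=
  AddCircle.isOpen_coe_image_Ioo.prod isOpen_univ

theorem isConnected_strip [ConnectedSpace Y] {θ : Fin (n + 1) → ℝ} (hθ : StrictMono θ) (k : Fin n) :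
    IsConnected (strip p Y θ k) :=
  ((isConnected_Ioo (hθ k.castSucc_lt_succ)).image _
    (AddCircle.continuous_mk' p).continuousOn).prod isConnected_univ

theorem closure_strip {θ : Fin (n + 1) → ℝ} (hθ : StrictMono θ) (k : Fin n) :
    closure (strip p Y θ k) = ((↑) '' Icc (θ k.castSucc) (θ k.succ)) ×ˢ univ := by
  rw [strip, closure_prod_eq, closure_univ,
    AddCircle.closure_coe_image_Ioo (hθ k.castSucc_lt_succ)]

theorem coe_succ_eq_coe_castSucc_add_one {θ : Fin (n + 2) → ℝ} (hper : θ (Fin.last _) = θ 0 + p)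
    (k : Fin (n + 1)) : (θ k.succ : AddCircle p) = θ (k + 1).castSucc := by
  induction k using Fin.lastCases with
  | last => rw [Fin.succ_last, hper, Fin.last_add_one, Fin.castSucc_zero, AddCircle.coe_add_period]
  | cast i => rw [Fin.coeSucc_eq_succ, Fin.succ_castSucc]

theorem closure_strip_inter_add_one_nonempty [Nonempty Y] {θ : Fin (n + 2) → ℝ}
    (hθ : StrictMono θ) (hper : θ (Fin.last _) = θ 0 + p) (k : Fin (n + 1)) :
    (closure (strip p Y θ k) ∩ closure (strip p Y θ (k + 1))).Nonempty := by
  obtain ⟨y⟩ := ‹Nonempty Y›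
  refine ⟨(θ k.succ, y), ?_, ?_⟩ <;> rw [closure_strip hθ] <;> refine ⟨?_, trivial⟩
  · exact ⟨θ k.succ, ⟨(hθ k.castSucc_lt_succ).le, le_rfl⟩, rfl⟩
  · rw [coe_succ_eq_coe_castSucc_add_one hper]
    exact ⟨_, ⟨le_rfl, (hθ (k + 1).castSucc_lt_succ).le⟩, rfl⟩

variable [Fact (0 < p)]

theorem interior_closure_strip {θ : Fin (n + 3) → ℝ} (hθ : StrictMono θ)
    (hper : θ (Fin.last _) = θ 0 + p) (k : Fin (n + 2)) :
    interior (closure (strip p Y θ k)) = strip p Y θ k := by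
  have := hθ.succ_sub_castSucc_lt k
  rw [strip, closure_prod_eq, closure_univ, interior_prod_eq, interior_univ,
    AddCircle.interior_closure_coe_image_Ioo (hθ k.castSucc_lt_succ) (by linarith)]

theorem frontier_strip {θ : Fin (n + 1) → ℝ} (hθ : StrictMono θ)
    (hper : θ (Fin.last n) = θ 0 + p) (k : Fin n) :
    frontier (strip p Y θ k) =
      {(θ k.castSucc : AddCircle p), (θ k.succ : AddCircle p)} ×ˢ univ := by
  have := hθ.monotone.succ_sub_castSucc_le k
  rw [strip, frontier_prod_univ_eq,
    AddCircle.frontier_coe_image_Ioo (hθ k.castSucc_lt_succ) (by linarith)]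

theorem iUnion_closure_strip {θ : Fin (n + 1) → ℝ} (hθ : StrictMono θ)
    (hper : θ (Fin.last n) = θ 0 + p) : ⋃ k, closure (strip p Y θ k) = univ := by
  refine eq_univ_of_forall fun ⟨z, y⟩ => ?_
  obtain ⟨x, hx, rfl⟩ : z ∈ (↑) '' Ico (θ 0) (θ 0 + p) := by
    rw [AddCircle.coe_image_Ico_eq]; trivial
  obtain ⟨k, hk⟩ := Fin.exists_mem_Ico_castSucc_succ θ (hper ▸ hx)
  rw [mem_iUnion]
  exact ⟨k, by rw [closure_strip hθ]; exact ⟨⟨x, Ico_subset_Icc_self hk, rfl⟩, trivial⟩⟩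

theorem not_isPreconnected_iUnion_frontier_strip [Nonempty Y] {θ : Fin (n + 3) → ℝ}
    (hθ : StrictMono θ) (hper : θ (Fin.last _) = θ 0 + p) :
    ¬ IsPreconnected (⋃ k, frontier (strip p Y θ k)) := by
  intro h
  have himage : Prod.fst '' ⋃ k, frontier (strip p Y θ k) =
      ⋃ k : Fin (n + 2), {(θ k.castSucc : AddCircle p), (θ k.succ : AddCircle p)} := by
    simp_rw [image_iUnion, frontier_strip hθ hper, fst_image_prod _ univ_nonempty]
  refine (h.image _ continuous_fst.continuousOn).infinite_of_nontrivial ?_ ?_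
  · have := hθ.succ_sub_castSucc_lt 0
    rw [himage]
    refine ⟨_, mem_iUnion.2 ⟨0, .inl rfl⟩, _, mem_iUnion.2 ⟨0, .inr rfl⟩, ?_⟩
    exact AddCircle.coe_ne_coe_of_lt_of_lt_add (hθ (Fin.castSucc_lt_succ (i := 0))) (by linarith)
  · rw [himage]
    exact finite_iUnion fun _ => toFinite _

end Strip

/-- The partition of the flat cylinder `(ℝ/ℤ) × ℝ^{n-1}` into `q ≥ 3`
vertical strips `Ω_k = (θ_{k-1}, θ_k) × ℝ^{n-1}` (for `0 = θ₀ < θ₁ < … < θ_q = 1`) has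
disconnected union of cell boundaries, each cell is open and connected with
`Ω_k = interior (closure Ω_k)` and the closures cover the space, yet there is no
partition of `{1,…,q}` into non-empty sets `I`, `{ℓ}`, `J` with the space equal to the
disjoint union of `Ω̄_I`, `Ω_ℓ` and `Ω̄_J`. Hence the conclusion of the
"2-connected partition" theorem fails without simple connectedness. -/
theorem cylinder_counterexample
    (m q : ℕ) (hq : 3 ≤ q) (θ : Fin (q+1) → ℝ)
    (hmono : StrictMono θ) (h0 : θ 0 = 0) (h1 : θ (Fin.last q) = 1) :
    ∀ Ω : Fin q → Set (AddCircle (1:ℝ) × (Fin m → ℝ)),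
      (Ω = fun k => {p : AddCircle (1:ℝ) × (Fin m → ℝ) |
        p.1 ∈ (fun t : ℝ => (t : AddCircle (1:ℝ))) '' Ioo (θ k.castSucc) (θ k.succ)}) →
      (¬ IsPreconnected (⋃ k, frontier (Ω k))) ∧
      (∀ k, IsOpen (Ω k) ∧ IsConnected (Ω k) ∧ Ω k = interior (closure (Ω k))) ∧
      (⋃ k, closure (Ω k)) = univ ∧
      ¬ ∃ (I J : Set (Fin q)) (ℓ : Fin q),
          I.Nonempty ∧ J.Nonempty ∧ ℓ ∉ I ∧ ℓ ∉ J ∧ Disjoint I J ∧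
          I ∪ J ∪ {ℓ} = univ ∧
          (univ : Set (AddCircle (1:ℝ) × (Fin m → ℝ)))
            = (⋃ i ∈ I, closure (Ω i)) ∪ Ω ℓ ∪ (⋃ j ∈ J, closure (Ω j)) ∧
          Disjoint (⋃ i ∈ I, closure (Ω i)) (Ω ℓ) ∧
          Disjoint (⋃ j ∈ J, closure (Ω j)) (Ω ℓ) ∧
          Disjoint (⋃ i ∈ I, closure (Ω i)) (⋃ j ∈ J, closure (Ω j)) := by
  intro Ω hΩ
  obtain ⟨n, rfl⟩ : ∃ n, q = n + 2 := ⟨q - 2, by omega⟩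
  have hper : θ (Fin.last _) = θ 0 + 1 := by rw [h0, h1, zero_add]
  obtain rfl : Ω = strip 1 (Fin m → ℝ) θ := by
    rw [hΩ]; ext k x; simp [strip]
  refine ⟨not_isPreconnected_iUnion_frontier_strip hmono hper, fun k => ⟨isOpen_strip θ k,
    isConnected_strip hmono k, (interior_closure_strip hmono hper k).symm⟩,
    iUnion_closure_strip hmono hper, ?_⟩
  rintro ⟨I, J, ℓ, hI, hJ, hℓI, hℓJ, hIJ, hcover, -, -, -, hdisj⟩
  exact not_disjoint_biUnion_of_cyclic (closure_strip_inter_add_one_nonempty hmono hper)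
    hI hJ hℓI hℓJ hIJ hcover hdisj
end

section
/- Let X be a connected topological space and let Ω₁, Ω₂ be disjoint non-empty open sets with closure(Ω₁) ∪ closure(Ω₂) = X, Ω_i = interior(closure(Ω_i)), and each Ω_i connected. If additionally X is simply connected and locally path-connected metric, then Σ = ∂Ω₁ = ∂Ω₂ is connected. -/
/-!
The common boundary is `closure Ω₁ ∩ closure Ω₂`, so it suffices that a simply connected,
locally path-connected normal space is unicoherent: if `X = A ∪ B` with `A`, `B` closed and
connected, then `A ∩ B` is connected. Otherwise split `A ∩ B = P ∪ Q` and take an Urysohn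
function `φ` that is `0` on `P` and `1` on `Q`. The map equal to `exp (iπφ)` on `A` and to
`exp (-iπφ)` on `B` is continuous, hence has a real lift `F`. On the connected set `A` the
lift differs from `πφ` by a constant, so `F` increases by `π` from `P` to `Q`; on `B` it
differs from `-πφ` by a constant, so it increases by `-π`.
-/

open Set

namespace Circle

theorem exists_continuous_exp_lift {X : Type*} [TopologicalSpace X] [SimplyConnectedSpace X]
    [LocallyPathConnectedSpace X] {f : X → Circle} (hf : Continuous f) :
    ∃ F : X → ℝ, Continuous F ∧ ∀ x, exp (F x) = f x := by
  obtain ⟨x₀⟩ : Nonempty X := inferInstance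
  obtain ⟨F, -, hF⟩ := (isCoveringMap_exp.existsUnique_continuousMap_lifts ⟨f, hf⟩ x₀
    (f x₀ : ℂ).arg (exp_arg _)).exists
  exact ⟨F, F.continuous, congrFun hF⟩

end Circle

open Circle

theorem IsPreconnected.sub_eq_of_eqOn_exp {X : Type*} [TopologicalSpace X] {S : Set X}
    (hS : IsPreconnected S) {g h : X → ℝ} (hg : ContinuousOn g S) (hh : ContinuousOn h S)
    (he : S.EqOn (exp ∘ g) (exp ∘ h)) {x y : X} (hx : x ∈ S) (hy : y ∈ S) :
    g x - h x = g y - h y := by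
  have hdiscrete : IsDiscrete (AddSubgroup.zmultiples (2 * Real.pi) : Set ℝ) :=
    isDiscrete_iff_discreteTopology.mpr
      (inferInstanceAs (DiscreteTopology (AddSubgroup.zmultiples (2 * Real.pi))))
  refine hS.constant_of_mapsTo hdiscrete (hg.sub hh) (fun z hz => ?_) hx hy
  obtain ⟨m, hm⟩ := exp_eq_exp.mp (he hz)
  exact AddSubgroup.mem_zmultiples_iff.mpr ⟨m, by simp only [Pi.sub_apply, zsmul_eq_mul]; linarith⟩

theorem IsPreconnected.inter_of_union_eq_univ_s13 {X : Type*} [TopologicalSpace X] [NormalSpace X]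
    [SimplyConnectedSpace X] [LocallyPathConnectedSpace X] {A B : Set X}
    (hAc : IsPreconnected A) (hBc : IsPreconnected B) (hA : IsClosed A) (hB : IsClosed B)
    (hAB : A ∪ B = univ) : IsPreconnected (A ∩ B) := by
  classical
  rw [isPreconnected_closed_iff]
  rintro P Q hP hQ hPQ ⟨p, hpAB, hpP⟩ ⟨q, hqAB, hqQ⟩
  by_contra hdisj
  obtain ⟨φ, hφP, hφQ, -⟩ := exists_continuous_zero_one_of_isClosed ((hA.inter hB).inter hP)
    ((hA.inter hB).inter hQ) (by
      rw [Set.disjoint_iff]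
      rintro x ⟨⟨hxAB, hxP⟩, -, hxQ⟩
      exact hdisj ⟨x, hxAB, hxP, hxQ⟩)
  have hagree : ∀ x ∈ A ∩ B, exp (Real.pi * φ x) = exp (-(Real.pi * φ x)) := by
    intro x hx
    rcases hPQ hx with hxP | hxQ
    · simp [hφP ⟨hx, hxP⟩]
    · simp only [hφQ ⟨hx, hxQ⟩, Pi.one_apply, mul_one]
      exact exp_eq_exp.mpr ⟨1, by ring⟩
  set f : X → Circle := fun x =>
    if x ∈ A then exp (Real.pi * φ x) else exp (-(Real.pi * φ x))
  have hf : Continuous f := by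
    refine Continuous.if (fun x hx => hagree x ⟨hA.frontier_subset hx, ?_⟩) (by fun_prop)
      (by fun_prop)
    rw [← frontier_compl] at hx
    exact closure_minimal (compl_subset_iff_union.mpr hAB) hB (frontier_subset_closure hx)
  obtain ⟨F, hFc, hF⟩ := exists_continuous_exp_lift hf
  have hFA : A.EqOn (exp ∘ F) (exp ∘ fun x => Real.pi * φ x) := fun x hx => by
    simp only [Function.comp_apply, hF, f, if_pos hx]
  have hFB : B.EqOn (exp ∘ F) (exp ∘ fun x => -(Real.pi * φ x)) := fun x hx => by
    by_cases hxA : x ∈ A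
    · simp only [Function.comp_apply, hF, f, if_pos hxA, hagree x ⟨hxA, hx⟩]
    · simp only [Function.comp_apply, hF, f, if_neg hxA]
  have hA' := hAc.sub_eq_of_eqOn_exp hFc.continuousOn (by fun_prop) hFA hpAB.1 hqAB.1
  have hB' := hBc.sub_eq_of_eqOn_exp hFc.continuousOn (by fun_prop) hFB hpAB.2 hqAB.2
  simp only [hφP ⟨hpAB, hpP⟩, hφQ ⟨hqAB, hqQ⟩, Pi.zero_apply, Pi.one_apply] at hA' hB'
  linarith [Real.pi_pos]

theorem IsClosed.inter_nonempty_of_union_eq_univ {X : Type*} [TopologicalSpace X]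
    [PreconnectedSpace X] {A B : Set X} (hA : IsClosed A) (hB : IsClosed B)
    (hAn : A.Nonempty) (hBn : B.Nonempty) (hAB : A ∪ B = univ) : (A ∩ B).Nonempty := by
  simpa using isPreconnected_closed_iff.mp isPreconnected_univ A B hA hB hAB.superset
    (by simpa using hAn) (by simpa using hBn)

theorem frontier_eq_closure_inter_closure_of_disjoint {X : Type*} [TopologicalSpace X]
    {U V : Set X} (hU : IsOpen U) (hUV : Disjoint U V) (hreg : U = interior (closure U))
    (hcover : closure U ∪ closure V = univ) : frontier U = closure U ∩ closure V := by
  have hU_eq : U = (closure V)ᶜ := by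
    refine Subset.antisymm (subset_compl_iff_disjoint_right.mpr (hUV.closure_right hU)) ?_
    calc (closure V)ᶜ ⊆ interior (closure U) :=
          interior_maximal (compl_subset_iff_union.mpr ((union_comm _ _).trans hcover))
            isClosed_closure.isOpen_compl
      _ = U := hreg.symm
  rw [frontier, hU.interior_eq, ← sdiff_compl, ← hU_eq]

theorem two_cell_partition_boundary_connected_general
    {X : Type*} [MetricSpace X] [SimplyConnectedSpace X]
    [LocallyPathConnectedSpace X]
    (Ω₁ Ω₂ : Set X) (hd : Disjoint Ω₁ Ω₂)
    (hne₁ : Ω₁.Nonempty) (hne₂ : Ω₂.Nonempty)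
    (ho₁ : IsOpen Ω₁) (ho₂ : IsOpen Ω₂)
    (hc₁ : IsConnected Ω₁) (hc₂ : IsConnected Ω₂)
    (hreg₁ : Ω₁ = interior (closure Ω₁)) (hreg₂ : Ω₂ = interior (closure Ω₂))
    (hcover : closure Ω₁ ∪ closure Ω₂ = univ) :
    frontier Ω₁ = frontier Ω₂ ∧ IsConnected (frontier Ω₁) := by
  have h₁ := frontier_eq_closure_inter_closure_of_disjoint ho₁ hd hreg₁ hcover
  have h₂ := frontier_eq_closure_inter_closure_of_disjoint ho₂ hd.symm hreg₂
    ((union_comm _ _).trans hcover)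
  refine ⟨by rw [h₁, h₂, inter_comm], ?_⟩
  rw [h₁]
  exact ⟨isClosed_closure.inter_nonempty_of_union_eq_univ isClosed_closure hne₁.closure
      hne₂.closure hcover,
    hc₁.isPreconnected.closure.inter_of_union_eq_univ_s13 hc₂.isPreconnected.closure
      isClosed_closure isClosed_closure hcover⟩

/-- The `q = 2` case of the boundary-connectedness theorem: if `X`
is a connected, simply connected, locally path-connected metric space, and `Ω₁, Ω₂`
are disjoint non-empty open connected sets with `closure Ω₁ ∪ closure Ω₂ = X` and
`Ω_i = interior (closure Ω_i)`, then `Σ = ∂Ω₁ = ∂Ω₂` is connected. -/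
theorem two_cell_partition_boundary_connected
    {X : Type*} [MetricSpace X] [ConnectedSpace X] [SimplyConnectedSpace X]
    [LocallyPathConnectedSpace X]
    (Ω₁ Ω₂ : Set X) (hd : Disjoint Ω₁ Ω₂)
    (hne₁ : Ω₁.Nonempty) (hne₂ : Ω₂.Nonempty)
    (ho₁ : IsOpen Ω₁) (ho₂ : IsOpen Ω₂)
    (hc₁ : IsConnected Ω₁) (hc₂ : IsConnected Ω₂)
    (hreg₁ : Ω₁ = interior (closure Ω₁)) (hreg₂ : Ω₂ = interior (closure Ω₂))
    (hcover : closure Ω₁ ∪ closure Ω₂ = univ) :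
    frontier Ω₁ = frontier Ω₂ ∧ IsConnected (frontier Ω₁) :=
  two_cell_partition_boundary_connected_general Ω₁ Ω₂ hd hne₁ hne₂ ho₁ ho₂ hc₁ hc₂ hreg₁ hreg₂
    hcover
end
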